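/- arXiv:2307.03956 — 4 statements merged into one kernel-verified Lean document; each statement's English description precedes it below -/
import Mathlib

section
/- Let d ≥ 2 be an integer, let θ_c = (√d − 1)², and define g(θ) = ((d+1−θ)/2)·(1 − √(1 − 4d/(d+1−θ)²)) for θ ∈ (−∞, θ_c]. Then g is strictly increasing on (−∞, θ_c], g(θ_c) = √d, 0 < g(θ) < √d for every θ < θ_c, and g maps (−∞, θ_c] onto (0, √d]. -/
open Real

/-- The function `g(θ) = ((d+1−θ)/2)·(1 − √(1 − 4d/(d+1−θ)²))`. -/
noncomputable def gfun (d : ℕ) (θ : ℝ) : ℝ :=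
  (((d : ℝ) + 1 - θ) / 2) * (1 - Real.sqrt (1 - 4 * (d : ℝ) / ((d : ℝ) + 1 - θ) ^ 2))

lemma gfun_eq (d : ℕ) (hd : 2 ≤ d) (θ : ℝ) (hθ : θ ≤ (Real.sqrt d - 1) ^ 2) :
    gfun d θ = (((d:ℝ) + 1 - θ) - Real.sqrt (((d:ℝ) + 1 - θ)^2 - 4*d)) / 2 := by
  have hD : (2:ℝ) ≤ d := by exact_mod_cast hd
  have hD0 : (0:ℝ) < d := by linarith
  have hsd : (0:ℝ) < Real.sqrt d := Real.sqrt_pos.mpr hD0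
  have hsq : Real.sqrt d ^ 2 = d := Real.sq_sqrt hD0.le
  set s : ℝ := (d:ℝ) + 1 - θ with hs
  have hs2 : 2 * Real.sqrt d ≤ s := by nlinarith [hθ, hsq]
  have hs0 : 0 < s := by nlinarith
  have h1 : 1 - 4 * (d:ℝ) / s ^ 2 = (s^2 - 4*d) / s^2 := by
    field_simp
  rw [gfun, ← hs, h1, Real.sqrt_div (by nlinarith) _, Real.sqrt_sq hs0.le]
  field_simp

lemma gfun_key (d : ℕ) (hd : 2 ≤ d) (θ : ℝ) (hθ : θ ≤ (Real.sqrt d - 1) ^ 2) :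
    gfun d θ ∈ Set.Ioc 0 (Real.sqrt d) ∧
    (d : ℝ) + 1 - gfun d θ - d / gfun d θ = θ := by
  have hD : (2:ℝ) ≤ d := by exact_mod_cast hd
  have hD0 : (0:ℝ) < d := by linarith
  have hsd : (0:ℝ) < Real.sqrt d := Real.sqrt_pos.mpr hD0
  have hsq : Real.sqrt d ^ 2 = d := Real.sq_sqrt hD0.le
  set s : ℝ := (d:ℝ) + 1 - θ with hs
  have hs2 : 2 * Real.sqrt d ≤ s := by nlinarith [hθ, hsq]
  have hs0 : 0 < s := by nlinarith
  set t : ℝ := Real.sqrt (s^2 - 4*d) with ht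
  have ht0 : 0 ≤ t := Real.sqrt_nonneg _
  have ht2 : t ^ 2 = s^2 - 4*d := Real.sq_sqrt (by nlinarith)
  have hg : gfun d θ = (s - t) / 2 := gfun_eq d hd θ hθ
  have hts : t < s := by nlinarith
  have hg0 : 0 < gfun d θ := by rw [hg]; linarith
  have hgle : gfun d θ ≤ Real.sqrt d := by
    rw [hg]
    nlinarith [mul_nonneg (sub_nonneg.mpr hs2) hsd.le]
  have hprod : gfun d θ * (s - gfun d θ) = d := by
    rw [hg]; linear_combination (-(1:ℝ)/4) * ht2
  refine ⟨⟨hg0, hgle⟩, ?_⟩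
  have hdiv : (d:ℝ) / gfun d θ = s - gfun d θ := by
    rw [eq_comm, eq_div_iff hg0.ne']
    linarith [hprod, mul_comm (gfun d θ) (s - gfun d θ)]
  rw [hdiv, hs]; ring

lemma gfun_inv (d : ℕ) (hd : 2 ≤ d) (x : ℝ) (hx0 : 0 < x) (hx : x ≤ Real.sqrt d) :
    ((d:ℝ) + 1 - x - d/x) ≤ (Real.sqrt d - 1) ^ 2 ∧
    gfun d ((d:ℝ) + 1 - x - d/x) = x := by
  have hD : (2:ℝ) ≤ d := by exact_mod_cast hd
  have hD0 : (0:ℝ) < d := by linarith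
  have hsd : (0:ℝ) < Real.sqrt d := Real.sqrt_pos.mpr hD0
  have hsq : Real.sqrt d ^ 2 = d := Real.sq_sqrt hD0.le
  have hxd : x ^ 2 ≤ d := by nlinarith
  have hxdx : x ≤ d / x := by rw [le_div_iff₀ hx0]; nlinarith
  have hθ : (d:ℝ) + 1 - x - d/x ≤ (Real.sqrt d - 1) ^ 2 := by
    have h1 : x + d/x - 2*Real.sqrt d = (x - Real.sqrt d)^2 / x := by
      field_simp
      linear_combination -hsq
    have h2 : 0 ≤ (x - Real.sqrt d)^2 / x := div_nonneg (sq_nonneg _) hx0.le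
    nlinarith [hsq]
  refine ⟨hθ, ?_⟩
  rw [gfun_eq d hd _ hθ]
  have hs : (d:ℝ) + 1 - ((d:ℝ) + 1 - x - d/x) = x + d/x := by ring
  rw [hs]
  have h3 : (x + d/x)^2 - 4*d = (d/x - x)^2 := by
    field_simp
    ring
  rw [h3, Real.sqrt_sq (by linarith)]
  ring

theorem stmt15 (d : ℕ) (hd : 2 ≤ d) :
    StrictMonoOn (gfun d) (Set.Iic ((Real.sqrt d - 1) ^ 2)) ∧
    gfun d ((Real.sqrt d - 1) ^ 2) = Real.sqrt d ∧
    (∀ θ : ℝ, θ < (Real.sqrt d - 1) ^ 2 → 0 < gfun d θ ∧ gfun d θ < Real.sqrt d) ∧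
    gfun d '' Set.Iic ((Real.sqrt d - 1) ^ 2) = Set.Ioc 0 (Real.sqrt d) := by
  have hD : (2:ℝ) ≤ d := by exact_mod_cast hd
  have hD0 : (0:ℝ) < d := by linarith
  have hsd : (0:ℝ) < Real.sqrt d := Real.sqrt_pos.mpr hD0
  have hsq : Real.sqrt d ^ 2 = d := Real.sq_sqrt hD0.le
  -- strict monotonicity
  have hmono : StrictMonoOn (gfun d) (Set.Iic ((Real.sqrt d - 1) ^ 2)) := by
    intro θ₁ h₁ θ₂ h₂ hlt
    obtain ⟨⟨ha0, ha1⟩, ha2⟩ := gfun_key d hd θ₁ h₁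
    obtain ⟨⟨hb0, hb1⟩, hb2⟩ := gfun_key d hd θ₂ h₂
    by_contra hab
    push_neg at hab
    rcases eq_or_lt_of_le hab with heq | hblt
    · rw [← heq] at ha2
      exact absurd (ha2.symm.trans hb2) hlt.ne
    · -- gfun d θ₂ < gfun d θ₁, derive θ₂ < θ₁, contradiction
      set a := gfun d θ₂
      set b := gfun d θ₁
      have hab2 : a * b < d := by nlinarith
      have : θ₂ < θ₁ := by
        rw [← ha2, ← hb2]
        have h1 : (d:ℝ)/a - d/b = d * (b - a) / (a * b) := by
          field_simp
        have h3 : 0 < d * (b - a) / (a * b) - (b - a) := by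
          rw [div_sub' (by positivity : a * b ≠ 0)]
          apply div_pos _ (by positivity)
          nlinarith
        linarith [h1, h3]
      linarith
  refine ⟨hmono, ?_, ?_, ?_⟩
  · -- value at θ_c
    have hdd : (d:ℝ) / Real.sqrt d = Real.sqrt d := by
      rw [eq_comm, eq_div_iff hsd.ne']; nlinarith
    have := (gfun_inv d hd (Real.sqrt d) hsd le_rfl).2
    have harg : (d:ℝ) + 1 - Real.sqrt d - d / Real.sqrt d = (Real.sqrt d - 1)^2 := by
      rw [hdd]; nlinarith
    rwa [harg] at this
  · intro θ hθ
    obtain ⟨⟨h0, _⟩, _⟩ := gfun_key d hd θ hθ.le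
    refine ⟨h0, ?_⟩
    have hval : gfun d ((Real.sqrt d - 1)^2) = Real.sqrt d := by
      have hdd : (d:ℝ) / Real.sqrt d = Real.sqrt d := by
        rw [eq_comm, eq_div_iff hsd.ne']; nlinarith
      have := (gfun_inv d hd (Real.sqrt d) hsd le_rfl).2
      have harg : (d:ℝ) + 1 - Real.sqrt d - d / Real.sqrt d = (Real.sqrt d - 1)^2 := by
        rw [hdd]; nlinarith
      rwa [harg] at this
    have := hmono hθ.le (Set.self_mem_Iic) hθ
    rwa [hval] at this
  · ext x
    constructor
    · rintro ⟨θ, hθ, rfl⟩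
      exact (gfun_key d hd θ hθ).1
    · rintro ⟨hx0, hx1⟩
      obtain ⟨hθ, hval⟩ := gfun_inv d hd x hx0 hx1
      exact ⟨_, hθ, hval⟩
end

section
/- Let d ≥ 2 and R ≥ 1 be integers. For a probability vector p : {0,1,…,R+1} → [0,∞) with ∑_{k=0}^{R+1} p(k) = 1, define I(p) = (√((d−1)p(0)) − √(d·p(1)))² + ∑_{k=1}^{R−1} (√(p(k)) − √(d·p(k+1)))² + (√(p(R)+p(R+1)) − √(d·p(R+1)))². Then I(p) ≥ 0, and I(p) = 0 if and only if p(0) = 1/2, p(k) = (d−1)d^{−k}/2 for k = 1,…,R, and p(R+1) = d^{−R}/2. -/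
open Real Finset

/-- The rate function `I(p)` for the total local times at successive depths. -/
noncomputable def Irate (d R : ℕ) (p : ℕ → ℝ) : ℝ :=
  (Real.sqrt (((d : ℝ) - 1) * p 0) - Real.sqrt ((d : ℝ) * p 1)) ^ 2 +
  ∑ k ∈ Finset.Icc 1 (R - 1), (Real.sqrt (p k) - Real.sqrt ((d : ℝ) * p (k + 1))) ^ 2 +
  (Real.sqrt (p R + p (R + 1)) - Real.sqrt ((d : ℝ) * p (R + 1))) ^ 2

lemma sq_sqrt_sub_eq_zero (a b : ℝ) (ha : 0 ≤ a) (hb : 0 ≤ b) :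
    (Real.sqrt a - Real.sqrt b) ^ 2 = 0 ↔ a = b := by
  rw [pow_eq_zero_iff (by norm_num), sub_eq_zero, Real.sqrt_inj ha hb]

theorem stmt17 (d R : ℕ) (hd : 2 ≤ d) (hR : 1 ≤ R) (p : ℕ → ℝ)
    (hnn : ∀ k ≤ R + 1, 0 ≤ p k)
    (hsum : ∑ k ∈ Finset.range (R + 2), p k = 1) :
    0 ≤ Irate d R p ∧
    (Irate d R p = 0 ↔
      (p 0 = 1 / 2 ∧
       (∀ k, 1 ≤ k → k ≤ R → p k = ((d : ℝ) - 1) / (2 * (d : ℝ) ^ k)) ∧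
       p (R + 1) = 1 / (2 * (d : ℝ) ^ R))) := by
  have hd2 : (2:ℝ) ≤ (d:ℝ) := by exact_mod_cast hd
  have hd0 : (0:ℝ) < (d:ℝ) := by linarith
  have hdm1 : (0:ℝ) < (d:ℝ) - 1 := by linarith
  have hdR : (0:ℝ) < (d:ℝ) ^ R := pow_pos hd0 R
  have hp0 := hnn 0 (by omega)
  have hp1 := hnn 1 (by omega)
  have hpR := hnn R (by omega)
  have hpS := hnn (R+1) le_rfl
  refine ⟨by unfold Irate; positivity, ?_, ?_⟩
  · -- forward direction
    intro hI
    unfold Irate at hI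
    have hSnn : 0 ≤ ∑ k ∈ Finset.Icc 1 (R - 1),
        (Real.sqrt (p k) - Real.sqrt ((d : ℝ) * p (k + 1))) ^ 2 :=
      Finset.sum_nonneg fun k _ => sq_nonneg _
    have h1 : (Real.sqrt (((d : ℝ) - 1) * p 0) - Real.sqrt ((d : ℝ) * p 1)) ^ 2 = 0 := by
      nlinarith [sq_nonneg (Real.sqrt (((d : ℝ) - 1) * p 0) - Real.sqrt ((d : ℝ) * p 1)),
        sq_nonneg (Real.sqrt (p R + p (R + 1)) - Real.sqrt ((d : ℝ) * p (R + 1)))]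
    have h3 : (Real.sqrt (p R + p (R + 1)) - Real.sqrt ((d : ℝ) * p (R + 1))) ^ 2 = 0 := by
      nlinarith [sq_nonneg (Real.sqrt (((d : ℝ) - 1) * p 0) - Real.sqrt ((d : ℝ) * p 1)),
        sq_nonneg (Real.sqrt (p R + p (R + 1)) - Real.sqrt ((d : ℝ) * p (R + 1)))]
    have h2 : ∑ k ∈ Finset.Icc 1 (R - 1),
        (Real.sqrt (p k) - Real.sqrt ((d : ℝ) * p (k + 1))) ^ 2 = 0 := by
      nlinarith [sq_nonneg (Real.sqrt (((d : ℝ) - 1) * p 0) - Real.sqrt ((d : ℝ) * p 1)),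
        sq_nonneg (Real.sqrt (p R + p (R + 1)) - Real.sqrt ((d : ℝ) * p (R + 1)))]
    -- translate into equations
    have e0 : ((d : ℝ) - 1) * p 0 = (d : ℝ) * p 1 :=
      (sq_sqrt_sub_eq_zero _ _ (mul_nonneg hdm1.le hp0) (mul_nonneg hd0.le hp1)).mp h1
    have eR : p R + p (R + 1) = (d : ℝ) * p (R + 1) :=
      (sq_sqrt_sub_eq_zero _ _ (add_nonneg hpR hpS) (mul_nonneg hd0.le hpS)).mp h3
    have hall := (Finset.sum_eq_zero_iff_of_nonneg (fun k _ => sq_nonneg _)).mp h2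
    have ek : ∀ k, 1 ≤ k → k ≤ R - 1 → p k = (d : ℝ) * p (k + 1) := by
      intro k hk1 hk2
      have hm := hall k (Finset.mem_Icc.mpr ⟨hk1, hk2⟩)
      exact (sq_sqrt_sub_eq_zero _ _ (hnn k (by omega))
        (mul_nonneg hd0.le (hnn (k+1) (by omega)))).mp hm
    -- downward recursion
    have hdown : ∀ j, j ≤ R - 1 → p (R - j) = ((d:ℝ) - 1) * (d:ℝ) ^ j * p (R + 1) := by
      intro j
      induction j with
      | zero => intro _; simp only [Nat.sub_zero, pow_zero, mul_one]; linarith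
      | succ j ih =>
        intro hj
        have hj' : j ≤ R - 1 := by omega
        have h := ek (R - (j+1)) (by omega) (by omega)
        rw [show R - (j+1) + 1 = R - j from by omega] at h
        rw [h, ih hj']
        ring
    have hpk : ∀ k, 1 ≤ k → k ≤ R → p k = ((d:ℝ) - 1) * (d:ℝ) ^ (R - k) * p (R + 1) := by
      intro k h1 h2
      have := hdown (R - k) (by omega)
      rwa [show R - (R - k) = k from by omega] at this
    have hpow : (d:ℝ) * (d:ℝ) ^ (R - 1) = (d:ℝ) ^ R := by
      rw [← pow_succ']
      congr 1
      omega
    have hp0v : p 0 = (d:ℝ) ^ R * p (R + 1) := by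
      have h := e0
      rw [hpk 1 le_rfl hR] at h
      have h' : ((d:ℝ) - 1) * p 0 = ((d:ℝ) - 1) * ((d:ℝ) ^ R * p (R + 1)) := by
        rw [h, ← hpow]; ring
      exact mul_left_cancel₀ (ne_of_gt hdm1) h'
    -- use the sum condition
    rw [Finset.sum_range_succ', Finset.sum_range_succ] at hsum
    have hgeo : ∑ i ∈ Finset.range R, p (i + 1) = ((d:ℝ) ^ R - 1) * p (R + 1) := by
      have h1' : ∑ i ∈ Finset.range R, p (i + 1)
          = ∑ i ∈ Finset.range R, (((d:ℝ) - 1) * (d:ℝ) ^ (R - 1 - i) * p (R + 1)) := by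
        refine Finset.sum_congr rfl fun i hi => ?_
        have hi' := Finset.mem_range.mp hi
        rw [hpk (i+1) (by omega) (by omega), show R - (i+1) = R - 1 - i from by omega]
      rw [h1', Finset.sum_range_reflect (fun i => ((d:ℝ) - 1) * (d:ℝ) ^ i * p (R + 1)) R]
      have h3' := geom_sum_mul (d:ℝ) R
      calc ∑ i ∈ Finset.range R, (((d:ℝ) - 1) * (d:ℝ) ^ i * p (R + 1))
          = (∑ i ∈ Finset.range R, (d:ℝ) ^ i) * ((d:ℝ) - 1) * p (R + 1) := by
            rw [Finset.sum_mul, Finset.sum_mul]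
            exact Finset.sum_congr rfl fun i _ => by ring
        _ = ((d:ℝ) ^ R - 1) * p (R + 1) := by rw [h3']
    rw [hgeo, hp0v] at hsum
    have hq : p (R + 1) = 1 / (2 * (d:ℝ) ^ R) := by
      rw [eq_div_iff (by positivity)]
      nlinarith [hsum]
    refine ⟨?_, ?_, hq⟩
    · rw [hp0v, hq]
      field_simp
    · intro k h1 h2
      rw [hpk k h1 h2, hq, show (d:ℝ) ^ R = (d:ℝ) ^ (R - k) * (d:ℝ) ^ k from by
        rw [← pow_add]; congr 1; omega]
      have hk0 : (0:ℝ) < (d:ℝ) ^ k := pow_pos hd0 k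
      have hRk0 : (0:ℝ) < (d:ℝ) ^ (R - k) := pow_pos hd0 (R - k)
      field_simp
  · -- reverse direction
    rintro ⟨h0, hk, hlast⟩
    unfold Irate
    have t1 : ((d:ℝ) - 1) * p 0 = (d:ℝ) * p 1 := by
      rw [h0, hk 1 le_rfl hR]
      field_simp
    have t3 : p R + p (R + 1) = (d:ℝ) * p (R + 1) := by
      rw [hk R hR le_rfl, hlast, ← add_div, mul_one_div]
      norm_num
    have hsz : ∑ k ∈ Finset.Icc 1 (R - 1),
        (Real.sqrt (p k) - Real.sqrt ((d : ℝ) * p (k + 1))) ^ 2 = 0 := by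
      refine Finset.sum_eq_zero fun k hk' => ?_
      obtain ⟨hk1, hk2⟩ := Finset.mem_Icc.mp hk'
      have e : p k = (d:ℝ) * p (k + 1) := by
        rw [hk k hk1 (by omega), hk (k+1) (by omega) (by omega), pow_succ,
          mul_div_assoc', div_eq_div_iff (by positivity) (by positivity)]
        ring
      rw [e, sub_self, zero_pow two_ne_zero]
    rw [t1, t3, hsz, sub_self, zero_pow two_ne_zero]
    ring
end

section
/- Let d ≥ 4 be an integer and define F(w) = w·( d+1 − √d·( √(w/(d+w)) + √((d+w)/w) ) ) for w ∈ (0,∞). Then there exists a constant C ∈ (1,∞) such that F(w) + C ≥ (1 − √w)² for all w ∈ (0,∞). -/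
open Real

theorem stmt18 (d : ℕ) (hd : 4 ≤ d) :
    ∃ C : ℝ, 1 < C ∧ ∀ w : ℝ, 0 < w →
      (1 - Real.sqrt w) ^ 2 ≤
        w * ((d : ℝ) + 1 - Real.sqrt d *
          (Real.sqrt (w / ((d : ℝ) + w)) + Real.sqrt (((d : ℝ) + w) / w))) + C := by
  have hd4 : (4 : ℝ) ≤ (d : ℝ) := by exact_mod_cast hd
  have hd0 : (0 : ℝ) < (d : ℝ) := by linarith
  set t := Real.sqrt d with ht
  have ht0 : 0 ≤ t := Real.sqrt_nonneg _
  have ht2 : t ^ 2 = d := Real.sq_sqrt hd0.le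
  have htd : t ≤ (d : ℝ) / 2 := by
    have : t ≤ Real.sqrt (((d : ℝ) / 2) ^ 2) := by
      apply Real.sqrt_le_sqrt; nlinarith
    rwa [Real.sqrt_sq (by linarith)] at this
  refine ⟨1 + (d : ℝ) * t / 2, by nlinarith, fun w hw => ?_⟩
  have hs0 : 0 ≤ Real.sqrt w := Real.sqrt_nonneg _
  have hs2 : Real.sqrt w ^ 2 = w := Real.sq_sqrt hw.le
  set s := Real.sqrt w with hsdef
  have hA1 : Real.sqrt (w / ((d : ℝ) + w)) ≤ 1 := by
    rw [show (1 : ℝ) = Real.sqrt 1 by simp]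
    apply Real.sqrt_le_sqrt
    rw [div_le_one (by linarith)]
    linarith
  have hA0 : 0 ≤ Real.sqrt (w / ((d : ℝ) + w)) := Real.sqrt_nonneg _
  have hB : w * Real.sqrt (((d : ℝ) + w) / w) = Real.sqrt (w * ((d : ℝ) + w)) := by
    rw [← Real.sqrt_sq hw.le, ← Real.sqrt_mul (by positivity)]
    congr 1
    field_simp
    ring_nf; rw [Real.sq_sqrt (sq_nonneg w)]
  have hB2 : Real.sqrt (w * ((d : ℝ) + w)) ≤ w + (d : ℝ) / 2 := by
    have : Real.sqrt (w * ((d : ℝ) + w)) ≤ Real.sqrt ((w + (d : ℝ) / 2) ^ 2) := by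
      apply Real.sqrt_le_sqrt; nlinarith
    rwa [Real.sqrt_sq (by linarith)] at this
  have key : w * ((d : ℝ) + 1 - t *
      (Real.sqrt (w / ((d : ℝ) + w)) + Real.sqrt (((d : ℝ) + w) / w)))
      = w * ((d : ℝ) + 1) - t * (w * Real.sqrt (w / ((d : ℝ) + w)))
        - t * Real.sqrt (w * ((d : ℝ) + w)) := by
    rw [← hB]; ring
  rw [key]
  have h1 : t * (w * Real.sqrt (w / ((d : ℝ) + w))) ≤ t * w := by
    apply mul_le_mul_of_nonneg_left _ ht0
    nlinarith
  have h2 : t * Real.sqrt (w * ((d : ℝ) + w)) ≤ t * (w + (d : ℝ) / 2) :=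
    mul_le_mul_of_nonneg_left hB2 ht0
  nlinarith [mul_nonneg hw.le (sub_nonneg.mpr htd), mul_le_mul_of_nonneg_right htd hw.le]
end

section
/- Let ρ ∈ (0,∞) and let H : [0,∞) → ℝ be continuous with H(0) = 0, twice continuously differentiable on (0,∞), and satisfy lim_{u→∞} u·H''(u) = ρ. Then (1/t)·[H(ct) − c·H(t)] converges to ρ·c·log c as t → ∞, uniformly in c ∈ [0,1]; that is, lim_{t→∞} sup_{c∈[0,1]} | (1/t)(H(ct) − c·H(t)) − ρ·c·log c | = 0, where c·log c is interpreted as 0 at c = 0. -/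
open Real Filter Topology

private lemma aux_mul_log_le {c : ℝ} (h0 : 0 ≤ c) (h1 : c ≤ 1) :
    c * |Real.log c| ≤ 2 * Real.sqrt c := by
  rcases eq_or_lt_of_le h0 with h | h
  · simp [← h]
  · have hs : 0 < Real.sqrt c := Real.sqrt_pos.2 h
    have h2 : |Real.log c| = - Real.log c := abs_of_nonpos (Real.log_nonpos h0 h1)
    have h3 : Real.log c = 2 * Real.log (Real.sqrt c) := by
      rw [Real.log_sqrt h0]; ring
    have h4 : Real.log (Real.sqrt c)⁻¹ ≤ (Real.sqrt c)⁻¹ := by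
      have := Real.log_le_sub_one_of_pos (inv_pos.2 hs)
      linarith
    rw [Real.log_inv] at h4
    have h5 : c * (Real.sqrt c)⁻¹ = Real.sqrt c := by
      rw [eq_comm, ← Real.div_sqrt]; field_simp; rw [Real.sq_sqrt h0]
    calc c * |Real.log c| = 2 * (c * (- Real.log (Real.sqrt c))) := by rw [h2, h3]; ring
    _ ≤ 2 * (c * (Real.sqrt c)⁻¹) := by
        gcongr 2 * ?_
        exact mul_le_mul_of_nonneg_left h4 h0
    _ = 2 * Real.sqrt c := by rw [h5]

set_option maxHeartbeats 1600000 in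
theorem stmt19 (ρ : ℝ) (hρ : 0 < ρ) (H : ℝ → ℝ)
    (hcont : ContinuousOn H (Set.Ici 0)) (h0 : H 0 = 0)
    (hC2 : ContDiffOn ℝ 2 H (Set.Ioi 0))
    (hlim : Tendsto (fun u : ℝ => u * deriv (deriv H) u) atTop (𝓝 ρ)) :
    TendstoUniformlyOn (fun t : ℝ => fun c : ℝ => (1 / t) * (H (c * t) - c * H t))
      (fun c : ℝ => ρ * c * Real.log c) atTop (Set.Icc 0 1) := by
  -- basic differentiability facts
  have hH' : ∀ x ∈ Set.Ioi (0:ℝ), HasDerivAt H (deriv H x) x := by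
    intro x hx
    exact (((hC2.contDiffAt (isOpen_Ioi.mem_nhds hx)).differentiableAt
      (by norm_num)).hasDerivAt)
  have hcd1 : ContDiffOn ℝ 1 (deriv H) (Set.Ioi 0) :=
    hC2.deriv_of_isOpen isOpen_Ioi (by norm_num)
  have hH'' : ∀ x ∈ Set.Ioi (0:ℝ), HasDerivAt (deriv H) (deriv (deriv H) x) x := by
    intro x hx
    exact (((hcd1.contDiffAt (isOpen_Ioi.mem_nhds hx)).differentiableAt
      (by norm_num)).hasDerivAt)
  have hContH' : ContinuousOn (deriv H) (Set.Ioi 0) := hcd1.continuousOn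
  have hContH'' : ContinuousOn (deriv (deriv H)) (Set.Ioi 0) :=
    hcd1.continuousOn_deriv_of_isOpen isOpen_Ioi le_rfl
  -- FTC for H and deriv H
  have key0 : ∀ a b : ℝ, 0 < a → a ≤ b → H b - H a = ∫ u in a..b, deriv H u := by
    intro a b ha hab
    have hsub : Set.uIcc a b ⊆ Set.Ioi 0 := by
      rw [Set.uIcc_of_le hab]
      intro x hx; exact lt_of_lt_of_le ha hx.1
    exact (intervalIntegral.integral_eq_sub_of_hasDerivAt
      (fun x hx => hH' x (hsub hx)) ((hContH'.mono hsub).intervalIntegrable)).symm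
  have key1 : ∀ a b : ℝ, 0 < a → a ≤ b →
      deriv H b - deriv H a = ∫ u in a..b, deriv (deriv H) u := by
    intro a b ha hab
    have hsub : Set.uIcc a b ⊆ Set.Ioi 0 := by
      rw [Set.uIcc_of_le hab]
      intro x hx; exact lt_of_lt_of_le ha hx.1
    exact (intervalIntegral.integral_eq_sub_of_hasDerivAt
      (fun x hx => hH'' x (hsub hx)) ((hContH''.mono hsub).intervalIntegrable)).symm
  rw [Metric.tendstoUniformlyOn_iff]
  intro ε hε
  set ε' : ℝ := ε / 4 with hε'def
  have hε' : 0 < ε' := by positivity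
  -- choose M
  obtain ⟨M₀, hM₀⟩ : ∃ M₀ : ℝ, ∀ u ≥ M₀, |u * deriv (deriv H) u - ρ| ≤ ε' := by
    have h2 := hlim (Metric.closedBall_mem_nhds ρ hε')
    rw [Filter.mem_map, mem_atTop_sets] at h2
    obtain ⟨M₀, hM₀⟩ := h2
    refine ⟨M₀, fun u hu => ?_⟩
    have h3 := hM₀ u hu
    simp only [Set.mem_preimage, Metric.mem_closedBall, Real.dist_eq] at h3
    exact h3
  set M : ℝ := max M₀ 1 with hMdef
  have hM1 : (1:ℝ) ≤ M := le_max_right _ _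
  have hM0 : (0:ℝ) < M := lt_of_lt_of_le one_pos hM1
  have hMε : ∀ u : ℝ, M ≤ u → |u * deriv (deriv H) u - ρ| ≤ ε' :=
    fun u hu => hM₀ u (le_trans (le_max_left _ _) hu)
  set K : ℝ := ρ + ε' with hKdef
  have hK : 0 < K := by positivity
  -- pointwise bound on H''
  have hH''bd : ∀ u : ℝ, M ≤ u → |deriv (deriv H) u - ρ * (1/u)| ≤ ε' * (1/u) := by
    intro u hu
    have hu0 : 0 < u := lt_of_lt_of_le hM0 hu
    have heq1 : deriv (deriv H) u - ρ * (1/u) = (u * deriv (deriv H) u - ρ) / u := by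
      field_simp
    rw [heq1, abs_div, abs_of_pos hu0, mul_one_div]
    gcongr
    exact hMε u hu
  -- bound on |deriv H|
  set B : ℝ := |deriv H M| with hBdef
  have hB : 0 ≤ B := abs_nonneg _
  have hH'bd : ∀ s : ℝ, M ≤ s → |deriv H s| ≤ B + K * Real.log s := by
    intro s hs
    have hs0 : 0 < s := lt_of_lt_of_le hM0 hs
    have hint1 : IntervalIntegrable (fun u => |deriv (deriv H) u|) MeasureTheory.volume M s := by
      apply ContinuousOn.intervalIntegrable
      apply ContinuousOn.abs
      apply hContH''.mono
      rw [Set.uIcc_of_le hs]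
      intro x hx; exact lt_of_lt_of_le hM0 hx.1
    have hint2 : IntervalIntegrable (fun u => K * (1/u)) MeasureTheory.volume M s := by
      apply ContinuousOn.intervalIntegrable
      apply ContinuousOn.mul continuousOn_const
      apply ContinuousOn.div continuousOn_const continuousOn_id
      rw [Set.uIcc_of_le hs]
      intro x hx; exact ne_of_gt (lt_of_lt_of_le hM0 hx.1)
    have h1 : |deriv H s - deriv H M| ≤ K * Real.log s := by
      rw [key1 M s hM0 hs]
      show |∫ u in M..s, deriv (deriv H) u| ≤ K * Real.log s
      calc |∫ u in M..s, deriv (deriv H) u| ≤ ∫ u in M..s, |deriv (deriv H) u| :=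
            intervalIntegral.abs_integral_le_integral_abs hs
        _ ≤ ∫ u in M..s, K * (1/u) := by
            apply intervalIntegral.integral_mono_on hs hint1 hint2
            intro x hx
            have hx0 : 0 < x := lt_of_lt_of_le hM0 hx.1
            have hxM := hMε x hx.1
            have h2 : deriv (deriv H) x = (x * deriv (deriv H) x) / x := by field_simp
            rw [h2, abs_div, abs_of_pos hx0, mul_one_div]
            gcongr
            have h3 := abs_add_le (x * deriv (deriv H) x - ρ) ρ
            rw [sub_add_cancel] at h3
            rw [abs_of_pos hρ] at h3
            linarith [hMε x hx.1]
        _ = K * Real.log (s / M) := by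
            rw [intervalIntegral.integral_const_mul, integral_one_div]
            rw [Set.uIcc_of_le hs]
            intro hmem
            exact absurd hmem.1 (not_le.2 hM0)
        _ ≤ K * Real.log s := by
            apply mul_le_mul_of_nonneg_left _ (le_of_lt hK)
            apply Real.log_le_log (by positivity)
            rw [div_le_iff₀ hM0]
            nlinarith
    have h5 := abs_sub_abs_le_abs_sub (deriv H s) (deriv H M)
    linarith [hBdef.le, hBdef.ge]
  -- bound on |H|
  set C₀ : ℝ := |H M| with hC₀def
  have hC₀ : 0 ≤ C₀ := abs_nonneg _
  have hHbd : ∀ t : ℝ, M ≤ t → |H t| ≤ C₀ + t * (B + K * Real.log t) := by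
    intro t ht
    have ht0 : 0 < t := lt_of_lt_of_le hM0 ht
    have hlogt : 0 ≤ Real.log t := Real.log_nonneg (le_trans hM1 ht)
    have h1 : |H t - H M| ≤ (B + K * Real.log t) * |t - M| := by
      rw [key0 M t hM0 ht, ← Real.norm_eq_abs]
      apply intervalIntegral.norm_integral_le_of_norm_le_const
      intro x hx
      rw [Set.uIoc_of_le ht] at hx
      have hxM : M ≤ x := le_of_lt hx.1
      have hx0 : 0 < x := lt_of_lt_of_le hM0 hxM
      calc ‖deriv H x‖ ≤ B + K * Real.log x := hH'bd x hxM
        _ ≤ B + K * Real.log t := by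
            have := Real.log_le_log hx0 hx.2
            nlinarith
    have h2 : (B + K * Real.log t) * |t - M| ≤ t * (B + K * Real.log t) := by
      rw [abs_of_nonneg (by linarith : (0:ℝ) ≤ t - M)]
      nlinarith [mul_nonneg (add_nonneg hB (mul_nonneg hK.le hlogt)) hM0.le]
    have h6 := abs_sub_abs_le_abs_sub (H t) (H M)
    linarith [hC₀def.le, hC₀def.ge]
  -- bound on H on [0, M]
  obtain ⟨CM, hCM⟩ : ∃ CM : ℝ, ∀ x ∈ Set.Icc (0:ℝ) M, |H x| ≤ CM := by
    obtain ⟨CM, hCM⟩ := (isCompact_Icc (a := (0:ℝ)) (b := M)).exists_bound_of_continuousOn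
      (hcont.mono (by intro x hx; exact hx.1))
    exact ⟨CM, fun x hx => by simpa using hCM x hx⟩
  have hCM0 : 0 ≤ CM := le_trans (abs_nonneg _) (hCM 0 ⟨le_refl _, le_of_lt hM0⟩)
  -- the bound functions
  set φ₁ : ℝ → ℝ := fun t => CM * (1/t) + M * C₀ * ((1/t) * (1/t)) + M * B * (1/t)
      + M * K * (Real.log t * (1/t)) + ρ * (2 * Real.sqrt (M/t)) with hφ₁def
  set φ₂ : ℝ → ℝ := fun t => (2*C₀ + M*B) * (1/t) + M * K * (Real.log t * (1/t))
      + M * ρ * (Real.log t * (1/t)) with hφ₂def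
  have h1t : Tendsto (fun t : ℝ => 1/t) atTop (𝓝 0) := by
    simpa using tendsto_inv_atTop_zero
  have hlogt0 : Tendsto (fun t : ℝ => Real.log t * (1/t)) atTop (𝓝 0) := by
    have := Real.tendsto_pow_log_div_mul_add_atTop 1 0 1 one_ne_zero
    simp only [pow_one, one_mul, add_zero] at this
    simpa [div_eq_mul_inv, one_div] using this
  have hsq0 : Tendsto (fun t : ℝ => Real.sqrt (M/t)) atTop (𝓝 0) := by
    have h1 : Tendsto (fun t : ℝ => M/t) atTop (𝓝 0) :=
      tendsto_const_nhds.div_atTop tendsto_id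
    have := (Real.continuous_sqrt.tendsto 0).comp h1
    simpa [Function.comp_def] using this
  have hφ0 : Tendsto (fun t => φ₁ t + φ₂ t) atTop (𝓝 0) := by
    have := ((((((h1t.const_mul CM).add ((h1t.mul h1t).const_mul (M*C₀))).add
      (h1t.const_mul (M*B))).add (hlogt0.const_mul (M*K))).add
      ((hsq0.const_mul 2).const_mul ρ)).add
      (((h1t.const_mul (2*C₀+M*B)).add (hlogt0.const_mul (M*K))).add
        (hlogt0.const_mul (M*ρ))))
    simp only [hφ₁def, hφ₂def]
    convert this using 2 <;> ring
  have hevφ : ∀ᶠ t in atTop, φ₁ t + φ₂ t < ε/2 :=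
    hφ0.eventually_lt_const (by positivity)
  filter_upwards [hevφ, eventually_ge_atTop (max 1 M)] with t hφt ht
  have ht1 : (1:ℝ) ≤ t := le_trans (le_max_left _ _) ht
  have htM : M ≤ t := le_trans (le_max_right _ _) ht
  have ht0 : (0:ℝ) < t := lt_of_lt_of_le one_pos ht1
  have hlogt : (0:ℝ) ≤ Real.log t := Real.log_nonneg ht1
  have hφ₁nn : 0 ≤ φ₁ t := by
    have : (0:ℝ) ≤ Real.sqrt (M/t) := Real.sqrt_nonneg _
    simp only [hφ₁def]
    positivity
  have hφ₂nn : 0 ≤ φ₂ t := by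
    simp only [hφ₂def]
    positivity
  intro c hc
  obtain ⟨hc0, hc1⟩ := hc
  rw [Real.dist_eq, abs_sub_comm]
  by_cases hct : c * t ≤ M
  · -- small c regime
    have hcMt : c ≤ M / t := (le_div_iff₀ ht0).2 hct
    have e1 : |(1/t) * H (c*t)| ≤ CM * (1/t) := by
      rw [abs_mul, abs_of_pos (by positivity : (0:ℝ) < 1/t), mul_comm]
      apply mul_le_mul_of_nonneg_right _ (by positivity)
      exact hCM (c*t) ⟨by positivity, hct⟩
    have e2 : |(1/t) * (c * H t)| ≤ M * C₀ * ((1/t) * (1/t)) + M * B * (1/t)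
        + M * K * (Real.log t * (1/t)) := by
      rw [abs_mul, abs_of_pos (by positivity : (0:ℝ) < 1/t), abs_mul,
        abs_of_nonneg hc0]
      calc (1/t) * (c * |H t|) ≤ (1/t) * ((M/t) * (C₀ + t * (B + K * Real.log t))) := by
            apply mul_le_mul_of_nonneg_left _ (by positivity)
            apply mul_le_mul hcMt (hHbd t htM) (abs_nonneg _) (by positivity)
        _ = M * C₀ * ((1/t) * (1/t)) + M * B * (1/t) + M * K * (Real.log t * (1/t)) := by
            field_simp
            ring
    have e3 : |ρ * c * Real.log c| ≤ ρ * (2 * Real.sqrt (M/t)) := by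
      rw [abs_mul, abs_mul, abs_of_pos hρ, abs_of_nonneg hc0, mul_assoc]
      apply mul_le_mul_of_nonneg_left _ (le_of_lt hρ)
      calc c * |Real.log c| ≤ 2 * Real.sqrt c := aux_mul_log_le hc0 hc1
        _ ≤ 2 * Real.sqrt (M/t) := by
            apply mul_le_mul_of_nonneg_left (Real.sqrt_le_sqrt hcMt) (by norm_num)
    have habs : |(1/t) * (H (c*t) - c * H t) - ρ * c * Real.log c| ≤
        |(1/t) * H (c*t)| + |(1/t) * (c * H t)| + |ρ * c * Real.log c| := by
      have heq : (1/t) * (H (c*t) - c * H t) - ρ * c * Real.log c =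
          (1/t) * H (c*t) + (-((1/t) * (c * H t))) + (-(ρ * c * Real.log c)) := by ring
      rw [heq]
      calc _ ≤ |(1/t) * H (c*t)| + |(-((1/t) * (c * H t)))| + |(-(ρ * c * Real.log c))| :=
            abs_add_three _ _ _
        _ = _ := by rw [abs_neg, abs_neg]
    have hlt1 : φ₁ t < ε := by
      clear_value φ₁ φ₂
      linarith
    calc |(1/t) * (H (c*t) - c * H t) - ρ * c * Real.log c| ≤ φ₁ t := by
          simp only [hφ₁def]; linarith
      _ < ε := hlt1
  · -- main regime: c * t > M
    push_neg at hct
    have hc0' : 0 < c := by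
      rcases lt_or_ge 0 c with h | h
      · exact h
      · exfalso; nlinarith
    set t₀ : ℝ := M / c with ht₀def
    have ht₀0 : 0 < t₀ := by positivity
    have ht₀t : t₀ < t := by
      rw [ht₀def, div_lt_iff₀ hc0']
      linarith [hct]
    have ht₀M : M ≤ t₀ := by
      rw [ht₀def, le_div_iff₀ hc0']
      nlinarith
    have hct₀ : c * t₀ = M := by
      rw [ht₀def]; field_simp
    set L : ℝ := ρ * c * Real.log c with hLdef
    -- derivative of A
    have hA' : ∀ s ∈ Set.Ioi (0:ℝ), HasDerivAt (fun s => H (c*s) - c * H s)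
        (c * deriv H (c*s) - c * deriv H s) s := by
      intro s hs
      have hcs : (0:ℝ) < c * s := mul_pos hc0' (Set.mem_Ioi.1 hs)
      have hg : HasDerivAt (fun y : ℝ => c * y) c s := by
        simpa using (hasDerivAt_id s).const_mul c
      have h1 : HasDerivAt (fun s : ℝ => H (c*s)) (deriv H (c*s) * c) s :=
        (hH' (c*s) hcs).comp s hg
      have h2 : HasDerivAt (fun s : ℝ => c * H s) (c * deriv H s) s :=
        (hH' s hs).const_mul c
      have := h1.sub h2
      simp only [mul_comm (deriv H (c*s)) c] at this; exact this
    -- continuity of the integrand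
    have hsubcc : Set.uIcc t₀ t ⊆ Set.Ioi 0 := by
      rw [Set.uIcc_of_le (le_of_lt ht₀t)]
      intro x hx; exact lt_of_lt_of_le ht₀0 hx.1
    have hcontA' : ContinuousOn (fun s => c * deriv H (c*s) - c * deriv H s)
        (Set.uIcc t₀ t) := by
      apply ContinuousOn.sub
      · apply ContinuousOn.mul continuousOn_const
        apply hContH'.comp ((continuous_const.mul continuous_id).continuousOn)
        intro x hx
        have := hsubcc hx
        simp only [Set.mem_Ioi] at this ⊢
        exact mul_pos hc0' this
      · exact ContinuousOn.mul continuousOn_const (hContH'.mono hsubcc)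
    have hintA' : IntervalIntegrable (fun s => c * deriv H (c*s) - c * deriv H s)
        MeasureTheory.volume t₀ t := hcontA'.intervalIntegrable
    have hftcA : (H (c*t) - c * H t) - (H (c*t₀) - c * H t₀) =
        ∫ s in t₀..t, (c * deriv H (c*s) - c * deriv H s) :=
      (intervalIntegral.integral_eq_sub_of_hasDerivAt
        (fun x hx => hA' x (hsubcc hx)) hintA').symm
    -- inner estimate
    have hinner : ∀ s ∈ Set.uIoc t₀ t,
        ‖(c * deriv H (c*s) - c * deriv H s) - L‖ ≤ 2 * ε' := by
      intro s hs
      rw [Set.uIoc_of_le (le_of_lt ht₀t)] at hs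
      have hs0 : 0 < s := lt_trans ht₀0 hs.1
      have hcsM : M ≤ c * s := by
        rw [← hct₀]
        exact mul_le_mul_of_nonneg_left (le_of_lt hs.1) (le_of_lt hc0')
      have hcs0 : 0 < c * s := lt_of_lt_of_le hM0 hcsM
      have hcss : c * s ≤ s := by nlinarith
      have hintsub : Set.uIcc (c*s) s ⊆ Set.Ioi 0 := by
        rw [Set.uIcc_of_le hcss]
        intro x hx; exact lt_of_lt_of_le hcs0 hx.1
      have hint1 : IntervalIntegrable (fun u => deriv (deriv H) u - ρ * (1/u))
          MeasureTheory.volume (c*s) s := by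
        apply ContinuousOn.intervalIntegrable
        apply ContinuousOn.sub (hContH''.mono hintsub)
        apply ContinuousOn.mul continuousOn_const
        apply ContinuousOn.div continuousOn_const continuousOn_id
        intro x hx; exact ne_of_gt (hintsub hx)
      have hint2 : IntervalIntegrable (fun u => |deriv (deriv H) u - ρ * (1/u)|)
          MeasureTheory.volume (c*s) s := hint1.abs
      have hint3 : IntervalIntegrable (fun u => ε' * (1/u))
          MeasureTheory.volume (c*s) s := by
        apply ContinuousOn.intervalIntegrable
        apply ContinuousOn.mul continuousOn_const
        apply ContinuousOn.div continuousOn_const continuousOn_id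
        intro x hx; exact ne_of_gt (hintsub hx)
      have hlogid : ∫ u in (c*s)..s, (1:ℝ)/u = - Real.log c := by
        rw [integral_one_div]
        · congr 1
          rw [show s / (c*s) = c⁻¹ by field_simp]
          exact Real.log_inv c
        · rw [Set.uIcc_of_le hcss]
          intro hmem
          exact absurd hmem.1 (not_le.2 hcs0)
      have hid : (c * deriv H (c*s) - c * deriv H s) - L =
          -c * ∫ u in (c*s)..s, (deriv (deriv H) u - ρ * (1/u)) := by
        rw [intervalIntegral.integral_sub ((hContH''.mono hintsub).intervalIntegrable)
          (by
            apply ContinuousOn.intervalIntegrable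
            apply ContinuousOn.mul continuousOn_const
            apply ContinuousOn.div continuousOn_const continuousOn_id
            intro x hx; exact ne_of_gt (hintsub hx))]
        rw [← key1 (c*s) s hcs0 hcss]
        rw [intervalIntegral.integral_const_mul, hlogid]
        simp only [hLdef]
        ring
      rw [Real.norm_eq_abs, hid, abs_mul, abs_neg, abs_of_pos hc0']
      have hbound : |∫ u in (c*s)..s, (deriv (deriv H) u - ρ * (1/u))| ≤
          ε' * (- Real.log c) := by
        calc |∫ u in (c*s)..s, (deriv (deriv H) u - ρ * (1/u))|
            ≤ ∫ u in (c*s)..s, |deriv (deriv H) u - ρ * (1/u)| :=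
              intervalIntegral.abs_integral_le_integral_abs hcss
          _ ≤ ∫ u in (c*s)..s, ε' * (1/u) := by
              apply intervalIntegral.integral_mono_on hcss hint2 hint3
              intro x hx
              exact hH''bd x (le_trans hcsM hx.1)
          _ = ε' * (- Real.log c) := by
              rw [intervalIntegral.integral_const_mul, hlogid]
      calc c * |∫ u in (c*s)..s, (deriv (deriv H) u - ρ * (1/u))|
          ≤ c * (ε' * (- Real.log c)) :=
            mul_le_mul_of_nonneg_left hbound (le_of_lt hc0')
        _ = ε' * (c * |Real.log c|) := by
            rw [abs_of_nonpos (Real.log_nonpos hc0 hc1)]; ring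
        _ ≤ ε' * (2 * Real.sqrt c) :=
            mul_le_mul_of_nonneg_left (aux_mul_log_le hc0 hc1) (le_of_lt hε')
        _ ≤ 2 * ε' := by
            have : Real.sqrt c ≤ 1 := by
              rw [show (1:ℝ) = Real.sqrt 1 by rw [Real.sqrt_one]]
              exact Real.sqrt_le_sqrt hc1
            nlinarith
    -- algebraic decomposition
    have hintL : IntervalIntegrable (fun _ : ℝ => L) MeasureTheory.volume t₀ t :=
      intervalIntegrable_const
    have hdecomp : (1/t) * (H (c*t) - c * H t) - L =
        (H (c*t₀) - c * H t₀) / t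
        + (1/t) * (∫ s in t₀..t, ((c * deriv H (c*s) - c * deriv H s) - L))
        - (t₀/t) * L := by
      rw [intervalIntegral.integral_sub hintA' hintL, ← hftcA,
        intervalIntegral.integral_const]
      field_simp
      ring
    -- bound the three pieces
    have p1 : |(H (c*t₀) - c * H t₀) / t| ≤ (2*C₀ + M*B) * (1/t)
        + M * K * (Real.log t * (1/t)) := by
      have hH1 : |H (c*t₀)| = C₀ := by rw [hct₀]
      have hH2 : c * |H t₀| ≤ C₀ + M*B + M * K * Real.log t := by
        have := hHbd t₀ ht₀M
        have hlogle : Real.log t₀ ≤ Real.log t := Real.log_le_log ht₀0 (le_of_lt ht₀t)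
        have hexp : c * (t₀ * (B + K * Real.log t₀)) = M * (B + K * Real.log t₀) := by
          rw [ht₀def]; field_simp
        calc c * |H t₀| ≤ c * (C₀ + t₀ * (B + K * Real.log t₀)) :=
              mul_le_mul_of_nonneg_left this (le_of_lt hc0')
          _ = c * C₀ + M * (B + K * Real.log t₀) := by rw [mul_add, hexp]
          _ ≤ C₀ + M*B + M * K * Real.log t := by
              nlinarith [mul_le_mul_of_nonneg_left hlogle (mul_nonneg hM0.le hK.le),
                mul_le_mul_of_nonneg_right hc1 hC₀]
      have htri : |H (c*t₀) - c * H t₀| ≤ C₀ + (C₀ + M*B + M * K * Real.log t) := by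
        calc |H (c*t₀) - c * H t₀| ≤ |H (c*t₀)| + |c * H t₀| := abs_sub _ _
          _ = C₀ + c * |H t₀| := by rw [hH1, abs_mul, abs_of_nonneg hc0]
          _ ≤ _ := by linarith
      rw [abs_div, abs_of_pos ht0]
      rw [div_le_iff₀ ht0]
      have hgoal : ((2*C₀ + M*B) * (1/t) + M * K * (Real.log t * (1/t))) * t
          = 2*C₀ + M*B + M * K * Real.log t := by field_simp
      rw [hgoal]
      linarith
    have p2 : |(1/t) * (∫ s in t₀..t, ((c * deriv H (c*s) - c * deriv H s) - L))|
        ≤ 2 * ε' := by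
      rw [abs_mul, abs_of_pos (by positivity : (0:ℝ) < 1/t)]
      have hnorm : ‖∫ s in t₀..t, ((c * deriv H (c*s) - c * deriv H s) - L)‖
          ≤ 2 * ε' * |t - t₀| :=
        intervalIntegral.norm_integral_le_of_norm_le_const hinner
      rw [Real.norm_eq_abs] at hnorm
      calc (1/t) * |∫ s in t₀..t, ((c * deriv H (c*s) - c * deriv H s) - L)|
          ≤ (1/t) * (2 * ε' * |t - t₀|) :=
            mul_le_mul_of_nonneg_left hnorm (by positivity)
        _ ≤ 2 * ε' := by
            rw [abs_of_nonneg (by linarith : (0:ℝ) ≤ t - t₀)]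
            rw [div_mul_eq_mul_div, one_mul, div_le_iff₀ ht0]
            nlinarith
    have p3 : |(t₀/t) * L| ≤ M * ρ * (Real.log t * (1/t)) := by
      have h1 : |(t₀/t) * L| = (t₀/t) * (ρ * (c * |Real.log c|)) := by
        rw [abs_mul, abs_of_pos (by positivity : (0:ℝ) < t₀/t), hLdef,
          abs_mul, abs_mul, abs_of_pos hρ, abs_of_nonneg hc0]
        ring
      rw [h1]
      have h2 : (t₀/t) * (ρ * (c * |Real.log c|)) = (M * ρ / t) * |Real.log c| := by
        rw [ht₀def]; field_simp
      rw [h2]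
      have h3 : |Real.log c| ≤ Real.log t := by
        rw [abs_of_nonpos (Real.log_nonpos hc0 hc1), ← Real.log_inv]
        apply Real.log_le_log (by positivity)
        rw [inv_le_iff_one_le_mul₀' hc0']
        nlinarith
      calc (M * ρ / t) * |Real.log c| ≤ (M * ρ / t) * Real.log t :=
            mul_le_mul_of_nonneg_left h3 (by positivity)
        _ = M * ρ * (Real.log t * (1/t)) := by field_simp
    have habs : |(1/t) * (H (c*t) - c * H t) - L| ≤
        |(H (c*t₀) - c * H t₀) / t|
        + |(1/t) * (∫ s in t₀..t, ((c * deriv H (c*s) - c * deriv H s) - L))|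
        + |(t₀/t) * L| := by
      rw [hdecomp]
      calc _ ≤ |(H (c*t₀) - c * H t₀) / t
            + (1/t) * (∫ s in t₀..t, ((c * deriv H (c*s) - c * deriv H s) - L))|
            + |(t₀/t) * L| := abs_sub _ _
        _ ≤ _ := by
            have := abs_add_le ((H (c*t₀) - c * H t₀) / t)
              ((1/t) * (∫ s in t₀..t, ((c * deriv H (c*s) - c * deriv H s) - L)))
            linarith
    have hfin : |(1/t) * (H (c*t) - c * H t) - L| ≤ 2 * ε' + φ₂ t := by
      simp only [hφ₂def]
      linarith
    have hlt2 : φ₂ t < ε / 2 := by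
      clear_value φ₁ φ₂
      linarith
    calc |(1/t) * (H (c*t) - c * H t) - ρ * c * Real.log c| ≤ 2 * ε' + φ₂ t := hfin
      _ = ε/2 + φ₂ t := by rw [hε'def]; ring
      _ < ε := by clear_value φ₂; linarith
end
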